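/- Let G be a group and suppose the graph Γ = {(x,y,z) : x·y = z} is a Boolean combination of cylinders over pairs of coordinates in G³. Then G is finite. -/

import Mathlib

/-- A cylinder over a pair of coordinates in `G³`: the preimage of a subset of
`G²` under one of the three coordinate-pair projections. -/
def IsPairCylinder {G : Type*} (S : Set (G × G × G)) : Prop :=
  (∃ P : Set (G × G), S = {p | (p.1, p.2.1) ∈ P}) ∨
  (∃ P : Set (G × G), S = {p | (p.2.1, p.2.2) ∈ P}) ∨
  (∃ P : Set (G × G), S = {p | (p.1, p.2.2) ∈ P})

/-- Membership in the Boolean algebra of sets generated by a family `B`. -/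
inductive BoolComb {α : Type*} (B : Set (Set α)) : Set α → Prop
  | base : ∀ s ∈ B, BoolComb B s
  | empty : BoolComb B ∅
  | compl : ∀ s, BoolComb B s → BoolComb B sᶜ
  | union : ∀ s t, BoolComb B s → BoolComb B t → BoolComb B (s ∪ t)
  | inter : ∀ s t, BoolComb B s → BoolComb B t → BoolComb B (s ∩ t)

attribute [local instance] Ultrafilter.mul Ultrafilter.semigroup

open Filter

section Aux

/-- Any Boolean combination of pair cylinders is recognized by finitely many colorings of the
three coordinate pairs. -/
private lemma extract_repr {G : Type*} {S : Set (G × G × G)}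
    (h : BoolComb {S : Set (G × G × G) | IsPairCylinder S} S) :
    ∃ (κ : Type) (_ : Finite κ) (f g k : G → G → κ) (T : Set (κ × κ × κ)),
      ∀ p : G × G × G, p ∈ S ↔ (f p.1 p.2.1, g p.2.1 p.2.2, k p.1 p.2.2) ∈ T := by
  induction h with
  | base s hs =>
    rcases hs with ⟨P, rfl⟩ | ⟨P, rfl⟩ | ⟨P, rfl⟩
    · exact ⟨Prop, inferInstance, fun x y => (x, y) ∈ P, fun _ _ => True, fun _ _ => True,
        {t | t.1}, fun p => Iff.rfl⟩
    · exact ⟨Prop, inferInstance, fun _ _ => True, fun y z => (y, z) ∈ P, fun _ _ => True,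
        {t | t.2.1}, fun p => Iff.rfl⟩
    · exact ⟨Prop, inferInstance, fun _ _ => True, fun _ _ => True, fun x z => (x, z) ∈ P,
        {t | t.2.2}, fun p => Iff.rfl⟩
  | empty =>
    exact ⟨Prop, inferInstance, fun _ _ => True, fun _ _ => True, fun _ _ => True, ∅,
      fun p => by simp⟩
  | compl s hs ih =>
    obtain ⟨κ, hκ, f, g, k, T, hT⟩ := ih
    exact ⟨κ, hκ, f, g, k, Tᶜ, fun p => by
      rw [Set.mem_compl_iff, Set.mem_compl_iff, hT p]⟩
  | union s t hs ht ih1 ih2 =>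
    obtain ⟨κ₁, hκ₁, f₁, g₁, k₁, T₁, hT₁⟩ := ih1
    obtain ⟨κ₂, hκ₂, f₂, g₂, k₂, T₂, hT₂⟩ := ih2
    haveI := hκ₁; haveI := hκ₂
    refine ⟨κ₁ × κ₂, inferInstance, fun x y => (f₁ x y, f₂ x y), fun y z => (g₁ y z, g₂ y z),
      fun x z => (k₁ x z, k₂ x z),
      {t | (t.1.1, t.2.1.1, t.2.2.1) ∈ T₁ ∨ (t.1.2, t.2.1.2, t.2.2.2) ∈ T₂}, fun p => ?_⟩
    rw [Set.mem_union, hT₁ p, hT₂ p]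
    exact Iff.rfl
  | inter s t hs ht ih1 ih2 =>
    obtain ⟨κ₁, hκ₁, f₁, g₁, k₁, T₁, hT₁⟩ := ih1
    obtain ⟨κ₂, hκ₂, f₂, g₂, k₂, T₂, hT₂⟩ := ih2
    haveI := hκ₁; haveI := hκ₂
    refine ⟨κ₁ × κ₂, inferInstance, fun x y => (f₁ x y, f₂ x y), fun y z => (g₁ y z, g₂ y z),
      fun x z => (k₁ x z, k₂ x z),
      {t | (t.1.1, t.2.1.1, t.2.2.1) ∈ T₁ ∧ (t.1.2, t.2.1.2, t.2.2.2) ∈ T₂}, fun p => ?_⟩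
    rw [Set.mem_inter_iff, hT₁ p, hT₂ p]
    exact Iff.rfl

/-- For a finite coloring and an ultrafilter, some color class is large. -/
private lemma exists_color {G : Type*} {κ : Type*} [Finite κ] (q : Ultrafilter G) (f : G → κ) :
    ∃ kk : κ, ∀ᶠ z in (q : Filter G), f z = kk := by
  obtain ⟨kk, hkk⟩ := Ultrafilter.eq_pure_of_finite (q.map f)
  refine ⟨kk, ?_⟩
  have h1 : ({kk} : Set κ) ∈ q.map f := by
    rw [hkk]
    exact Ultrafilter.mem_pure.mpr rfl
  have h2 : f ⁻¹' {kk} ∈ q := Ultrafilter.mem_map.mp h1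
  exact h2

/-- Monochromatic corners in an arbitrary infinite group, via a nonprincipal idempotent
ultrafilter. -/
private lemma exists_corner {G : Type*} [Group G] [Infinite G] {κ : Type*} [Finite κ]
    (χ : G → G → κ) :
    ∃ x g y : G, g ≠ 1 ∧ χ (x * g) y = χ x y ∧ χ x (g * y) = χ x y := by
  classical
  -- The set of ultrafilters containing all cofinite sets of the form `{a}ᶜ`
  set S : Set (Ultrafilter G) := ⋂ a : G, {U : Ultrafilter G | ({a}ᶜ : Set G) ∈ U} with hSdef
  have hclosed : IsClosed S := isClosed_iInter fun a => ultrafilter_isClosed_basic _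
  have hne : S.Nonempty := by
    refine ⟨Filter.hyperfilter G, Set.mem_iInter.mpr fun a => ?_⟩
    exact Ultrafilter.compl_mem_iff_notMem.mpr ((Set.finite_singleton a).notMem_hyperfilter)
  have hmul : ∀ U ∈ S, ∀ V ∈ S, U * V ∈ S := by
    intro U hU V hV
    rw [hSdef, Set.mem_iInter] at hV ⊢
    intro a
    have key : ∀ᶠ m in (U : Filter G), ∀ᶠ m' in (V : Filter G), m * m' ∈ ({a}ᶜ : Set G) := by
      refine Filter.Eventually.of_forall fun m => ?_
      have hv := hV (m⁻¹ * a)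
      have hv' : ∀ᶠ m' in (V : Filter G), m' ∈ ({m⁻¹ * a}ᶜ : Set G) := hv
      filter_upwards [hv'] with m' hm'
      intro hmm
      apply hm'
      have : m * m' = a := hmm
      simp [Set.mem_singleton_iff, eq_inv_mul_iff_mul_eq, this]
    exact (Ultrafilter.eventually_mul U V _).mpr key
  obtain ⟨q, hqS, hq⟩ := exists_idempotent_in_compact_subsemigroup
    Ultrafilter.continuous_mul_left S hne hclosed.isCompact hmul
  have hone : ∀ᶠ z in (q : Filter G), z ≠ (1 : G) := by
    have := Set.mem_iInter.mp hqS 1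
    filter_upwards [this] with z hz
    simpa using hz
  have star : ∀ p : G → Prop, (∀ᶠ z in (q : Filter G), p z) →
      ∀ᶠ m in (q : Filter G), ∀ᶠ m' in (q : Filter G), p (m * m') := by
    intro p hp
    have h2 : ∀ᶠ z in ((q * q : Ultrafilter G) : Filter G), p z := by rw [hq]; exact hp
    exact (Ultrafilter.eventually_mul q q p).mp h2
  -- choose the large color of each row
  choose c hc using fun x => exists_color q (χ x)
  obtain ⟨t, ht⟩ := exists_color q c
  have hstarX := star (fun z => c z = t) ht
  obtain ⟨x, hx1, hx2⟩ := (ht.and hstarX).exists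
  have hstarY := star (fun yy => χ x yy = c x) (hc x)
  obtain ⟨g, ⟨hgX, hgY⟩, hgne⟩ := ((hx2.and hstarY).and hone).exists
  obtain ⟨y, ⟨hy1, hy2⟩, hy3⟩ := (((hc x).and (hc (x * g))).and hgY).exists
  refine ⟨x, g, y, hgne, ?_, ?_⟩
  · rw [hy2, hy1, hgX, hx1]
  · rw [hy3, hy1]

end Aux

/-- If the multiplication graph of a group `G` is a Boolean combination of
cylinders over pairs of coordinates in `G³`, then `G` is finite. -/
theorem finite_of_mul_graph_boolComb_pair_cylinders
    {G : Type*} [Group G]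
    (h : BoolComb {S : Set (G × G × G) | IsPairCylinder S}
          {p : G × G × G | p.1 * p.2.1 = p.2.2}) :
    Finite G := by
  by_contra hfin
  haveI : Infinite G := not_finite_iff_infinite.mp hfin
  obtain ⟨κ, hκ, f, g, k, T, hT⟩ := extract_repr h
  haveI := hκ
  set χ : G → G → κ × κ × κ := fun x y => (f x y, g y (x * y), k x (x * y)) with hχ
  obtain ⟨x, g0, y, hg0, h1, h2⟩ := exists_corner χ
  have htrue : (f x y, g y (x * y), k x (x * y)) ∈ T := (hT (x, y, x * y)).mp rfl
  -- second component of h1 : χ (x*g0) y = χ x y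
  have e2 : g y (x * g0 * y) = g y (x * y) := congrArg (fun t => t.2.1) h1
  -- third component of h2 : χ x (g0*y) = χ x y
  have e3 : k x (x * (g0 * y)) = k x (x * y) := congrArg (fun t => t.2.2) h2
  have e3' : k x (x * g0 * y) = k x (x * y) := by rw [mul_assoc]; exact e3
  have hfalse : (f x y, g y (x * g0 * y), k x (x * g0 * y)) ∈ T := by
    rw [e2, e3']; exact htrue
  have hcontr : x * y = x * g0 * y := (hT (x, y, x * g0 * y)).mpr hfalse
  rw [mul_assoc] at hcontr
  have : y = g0 * y := mul_left_cancel hcontr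
  exact hg0 (right_eq_mul.mp this)
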